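/- Let f : ℝⁿ → ℝⁿ be continuous with a pseudo-Jacobian map Jf that is upper semicontinuous at x, and suppose α_{Jf}(x) > 0. Then the lower scalar Dini derivative satisfies D⁻ₓf := liminf_{y→x, y≠x} ‖f(y) − f(x)‖/‖y − x‖ ≥ α_{Jf}(x). -/

import Mathlib

open Pointwise

noncomputable def conorm {n : ℕ}
    (A : EuclideanSpace ℝ (Fin n) →L[ℝ] EuclideanSpace ℝ (Fin n)) : ℝ :=
  sInf ((fun u => ‖A u‖) '' {u | ‖u‖ = 1})

noncomputable def regIndex {n : ℕ}
    (Jf : EuclideanSpace ℝ (Fin n) →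
      Set (EuclideanSpace ℝ (Fin n) →L[ℝ] EuclideanSpace ℝ (Fin n)))
    (x : EuclideanSpace ℝ (Fin n)) : ℝ :=
  sInf (conorm '' (convexHull ℝ (Jf x)))

def IsPseudoJacobian {n m : ℕ}
    (f : EuclideanSpace ℝ (Fin n) → EuclideanSpace ℝ (Fin m))
    (J : Set (EuclideanSpace ℝ (Fin n) →L[ℝ] EuclideanSpace ℝ (Fin m)))
    (x : EuclideanSpace ℝ (Fin n)) : Prop :=
  J.Nonempty ∧ IsClosed J ∧
    ∀ (u : EuclideanSpace ℝ (Fin n)) (v : EuclideanSpace ℝ (Fin m)),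
      Filter.limsup
        (fun t : ℝ =>
          ((((inner ℝ v (f (x + t • u)) : ℝ) - (inner ℝ v (f x) : ℝ)) / t : ℝ) : EReal))
        (nhdsWithin 0 (Set.Ioi 0))
      ≤ ⨆ M ∈ J, ((inner ℝ v (M u) : ℝ) : EReal)

def UscAt {n : ℕ}
    (Jf : EuclideanSpace ℝ (Fin n) →
      Set (EuclideanSpace ℝ (Fin n) →L[ℝ] EuclideanSpace ℝ (Fin n)))
    (x : EuclideanSpace ℝ (Fin n)) : Prop :=
  ∀ ε > (0 : ℝ), ∃ δ > (0 : ℝ),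
    (⋃ y ∈ Metric.ball x δ, Jf y) ⊆
      Jf x + Metric.ball (0 : EuclideanSpace ℝ (Fin n) →L[ℝ] EuclideanSpace ℝ (Fin n)) ε

/-- The lower scalar Dini derivative of `f` at `x`, with values in `EReal`. -/
noncomputable def lowerDini {E F : Type*} [NormedAddCommGroup E] [NormedAddCommGroup F]
    (f : E → F) (x : E) : EReal :=
  Filter.liminf (fun y => ((‖f y - f x‖ / ‖y - x‖ : ℝ) : EReal)) (nhdsWithin x {x}ᶜ)

open Filter Topology Set
open scoped RealInnerProductSpace

/-! Write `y = x + T • u` with `T = ‖y - x‖`, `‖u‖ = 1`. The vectors `A u` with `A ∈ co Jf(x)`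
form a convex set of norm at least `α = α_{Jf}(x) > 0`, so the projection of `0` onto it yields a
unit `v` with `⟪v, A u⟫ ≥ α` there. By upper semicontinuity, `⟪v, M u⟫ > α - ε` for all
`M ∈ Jf(z)` with `z` near `x`, so the pseudo-Jacobian inequality bounds the upper right Dini
derivative of `t ↦ ⟪-v, f (x + t • u)⟫` by `ε - α` along the segment. The Dini mean value
inequality then gives `‖f y - f x‖ ≥ ⟪v, f y - f x⟫ ≥ (α - ε) T`. -/

lemma sub_le_mul_sub_of_limsup_slope_le {g : ℝ → ℝ} {a b c : ℝ} (hab : a ≤ b)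
    (hg : ContinuousOn g (Icc a b))
    (hd : ∀ t ∈ Ico a b,
      limsup (fun s : ℝ => (((g (t + s) - g t) / s : ℝ) : EReal)) (𝓝[>] 0) ≤ c) :
    g b - g a ≤ c * (b - a) := by
  have hB : ∀ t ∈ Ico a b, HasDerivWithinAt (fun z => g a + c * (z - a)) c (Ici t) t :=
    fun t _ => by
      simpa using (((hasDerivWithinAt_id t (Ici t)).sub_const a).const_mul c).const_add (g a)
  have bound : ∀ t ∈ Ico a b, ∀ r, c < r → ∃ᶠ z in 𝓝[>] t, slope g t z < r := by
    intro t ht r hr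
    have hlt : ∀ᶠ s in 𝓝[>] (0 : ℝ), (g (t + s) - g t) / s < r :=
      (eventually_lt_of_limsup_lt ((hd t ht).trans_lt (EReal.coe_lt_coe_iff.2 hr))).mono
        fun s hs => EReal.coe_lt_coe_iff.1 hs
    have hmap : map (t + ·) (𝓝[>] (0 : ℝ)) = 𝓝[>] t := by simp
    rw [← hmap, frequently_map]
    refine (hlt.mono fun s hs => ?_).frequently
    rwa [slope_def_field, add_sub_cancel_left]
  have := image_le_of_liminf_slope_right_le_deriv_boundary hg (by simp)
    (by fun_prop) hB bound (right_mem_Icc.2 hab)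
  linarith

lemma exists_norm_eq_one_forall_le_inner {E : Type*} [NormedAddCommGroup E]
    [InnerProductSpace ℝ E] [CompleteSpace E] {K : Set E} (hK : Convex ℝ K) (hne : K.Nonempty)
    {α : ℝ} (hα : 0 < α) (hbd : ∀ w ∈ K, α ≤ ‖w‖) :
    ∃ v : E, ‖v‖ = 1 ∧ ∀ w ∈ K, α ≤ ⟪v, w⟫ := by
  obtain ⟨p, hp, hpmin⟩ := exists_norm_eq_iInf_of_complete_convex hne.closure
    isClosed_closure.isComplete hK.closure 0
  have hobtuse := (norm_eq_iInf_iff_real_inner_le_zero hK.closure hp).1 hpmin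
  have hαp : α ≤ ‖p‖ := closure_minimal hbd (isClosed_le continuous_const continuous_norm) hp
  have hp0 : 0 < ‖p‖ := hα.trans_le hαp
  refine ⟨‖p‖⁻¹ • p, by simp [norm_smul, hp0.ne'], fun w hw => ?_⟩
  -- `p` is the point of `closure K` nearest to `0`, so `‖p‖ ^ 2 ≤ ⟪p, w⟫` on `K`
  have h := hobtuse w (subset_closure hw)
  rw [zero_sub, inner_neg_left, inner_sub_right, real_inner_self_eq_norm_sq] at h
  rw [real_inner_smul_left, le_inv_mul_iff₀ hp0]
  nlinarith

section conorm

variable {n : ℕ}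

lemma conorm_nonneg (A : EuclideanSpace ℝ (Fin n) →L[ℝ] EuclideanSpace ℝ (Fin n)) :
    0 ≤ conorm A :=
  Real.sInf_nonneg (by rintro _ ⟨u, -, rfl⟩; exact norm_nonneg _)

lemma conorm_le_norm_apply (A : EuclideanSpace ℝ (Fin n) →L[ℝ] EuclideanSpace ℝ (Fin n))
    {u : EuclideanSpace ℝ (Fin n)} (hu : ‖u‖ = 1) : conorm A ≤ ‖A u‖ :=
  csInf_le ⟨0, by rintro _ ⟨w, -, rfl⟩; exact norm_nonneg _⟩ ⟨u, hu, rfl⟩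

lemma regIndex_le_conorm
    {Jf : EuclideanSpace ℝ (Fin n) →
      Set (EuclideanSpace ℝ (Fin n) →L[ℝ] EuclideanSpace ℝ (Fin n))}
    {x : EuclideanSpace ℝ (Fin n)} {A : EuclideanSpace ℝ (Fin n) →L[ℝ] EuclideanSpace ℝ (Fin n)}
    (hA : A ∈ convexHull ℝ (Jf x)) : regIndex Jf x ≤ conorm A :=
  csInf_le ⟨0, by rintro _ ⟨B, -, rfl⟩; exact conorm_nonneg B⟩ (mem_image_of_mem _ hA)

lemma exists_norm_eq_one_forall_regIndex_le_inner
    {Jf : EuclideanSpace ℝ (Fin n) →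
      Set (EuclideanSpace ℝ (Fin n) →L[ℝ] EuclideanSpace ℝ (Fin n))}
    {x : EuclideanSpace ℝ (Fin n)} (hreg : 0 < regIndex Jf x)
    {u : EuclideanSpace ℝ (Fin n)} (hu : ‖u‖ = 1) :
    ∃ v : EuclideanSpace ℝ (Fin n), ‖v‖ = 1 ∧ ∀ A ∈ Jf x, regIndex Jf x ≤ ⟪v, A u⟫ := by
  set evalU := (ContinuousLinearMap.apply ℝ (EuclideanSpace ℝ (Fin n)) u).toLinearMap
  have hne : (convexHull ℝ (Jf x)).Nonempty := by
    by_contra hempty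
    rw [not_nonempty_iff_eq_empty] at hempty
    -- `sInf ∅ = 0`
    simp [regIndex, hempty] at hreg
  obtain ⟨v, hv, hsep⟩ := exists_norm_eq_one_forall_le_inner
    ((convex_convexHull ℝ (Jf x)).linear_image evalU) (hne.image evalU) hreg
    (by rintro _ ⟨A, hA, rfl⟩; exact (regIndex_le_conorm hA).trans (conorm_le_norm_apply A hu))
  exact ⟨v, hv, fun A hA => hsep _ ⟨A, subset_convexHull ℝ _ hA, rfl⟩⟩

end conorm

lemma sub_lt_inner_apply_of_mem_add_ball {E F : Type*} [NormedAddCommGroup E] [NormedSpace ℝ E]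
    [NormedAddCommGroup F] [InnerProductSpace ℝ F] {S : Set (E →L[ℝ] F)} {u : E} {v : F}
    {α ε : ℝ} (hu : ‖u‖ ≤ 1) (hv : ‖v‖ ≤ 1) (hS : ∀ A ∈ S, α ≤ ⟪v, A u⟫) {M : E →L[ℝ] F}
    (hM : M ∈ S + Metric.ball 0 ε) : α - ε < ⟪v, M u⟫ := by
  obtain ⟨A, hA, B, hB, rfl⟩ := hM
  have hsmall : |⟪v, B u⟫| < ε :=
    calc |⟪v, B u⟫| ≤ ‖v‖ * ‖B u‖ := abs_real_inner_le_norm _ _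
      _ ≤ ‖B u‖ := mul_le_of_le_one_left (norm_nonneg _) hv
      _ ≤ ‖B‖ := B.unit_le_opNorm u hu
      _ < ε := mem_ball_zero_iff.1 hB
  rw [show (A + B) u = A u + B u from rfl, inner_add_right]
  linarith [hS A hA, (abs_lt.1 hsmall).1]

lemma inner_sub_le_of_isPseudoJacobian {n m : ℕ}
    {f : EuclideanSpace ℝ (Fin n) → EuclideanSpace ℝ (Fin m)} (hf : Continuous f)
    {J : EuclideanSpace ℝ (Fin n) →
      Set (EuclideanSpace ℝ (Fin n) →L[ℝ] EuclideanSpace ℝ (Fin m))}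
    (hJ : ∀ y, IsPseudoJacobian f (J y) y) {x u : EuclideanSpace ℝ (Fin n)}
    {v : EuclideanSpace ℝ (Fin m)} {c T : ℝ} (hT : 0 ≤ T)
    (hc : ∀ t ∈ Ico 0 T, ∀ M ∈ J (x + t • u), ⟪v, M u⟫ ≤ c) :
    ⟪v, f (x + T • u) - f x⟫ ≤ c * T := by
  set g : ℝ → ℝ := fun t => ⟪v, f (x + t • u)⟫
  have hg : ContinuousOn g (Icc 0 T) := by fun_prop
  have hd : ∀ t ∈ Ico 0 T,
      limsup (fun s : ℝ => (((g (t + s) - g t) / s : ℝ) : EReal)) (𝓝[>] 0) ≤ c := by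
    intro t ht
    have hpt : ∀ s : ℝ, x + (t + s) • u = x + t • u + s • u := fun s => by
      rw [add_smul, add_assoc]
    simp only [g, hpt]
    exact ((hJ _).2.2 u v).trans (iSup₂_le fun M hM => EReal.coe_le_coe_iff.2 (hc t ht M hM))
  simpa [g, inner_sub_right] using sub_le_mul_sub_of_limsup_slope_le hT hg hd

lemma eventually_le_slope_of_lt_regIndex {n : ℕ}
    {f : EuclideanSpace ℝ (Fin n) → EuclideanSpace ℝ (Fin n)} (hf : Continuous f)
    {Jf : EuclideanSpace ℝ (Fin n) →
      Set (EuclideanSpace ℝ (Fin n) →L[ℝ] EuclideanSpace ℝ (Fin n))}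
    (hJf : ∀ y, IsPseudoJacobian f (Jf y) y) {x : EuclideanSpace ℝ (Fin n)} (husc : UscAt Jf x)
    (hreg : 0 < regIndex Jf x) {b : ℝ} (hb : b < regIndex Jf x) :
    ∀ᶠ y in 𝓝[≠] x, b ≤ ‖f y - f x‖ / ‖y - x‖ := by
  obtain ⟨δ, hδ, hJ_near⟩ := husc (regIndex Jf x - b) (by linarith)
  filter_upwards [nhdsWithin_le_nhds (Metric.ball_mem_nhds x hδ), self_mem_nhdsWithin]
    with y hy hyx
  set T := ‖y - x‖
  have hT : 0 < T := norm_pos_iff.2 (sub_ne_zero.2 hyx)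
  set u := T⁻¹ • (y - x)
  have hu : ‖u‖ = 1 := by rw [norm_smul, norm_inv, norm_norm, inv_mul_cancel₀ hT.ne']
  have hy_eq : x + T • u = y := by simp [u, smul_smul, hT.ne']
  obtain ⟨v, hv, hvJ⟩ := exists_norm_eq_one_forall_regIndex_le_inner hreg hu
  have hslope : ∀ t ∈ Ico 0 T, ∀ M ∈ Jf (x + t • u), ⟪-v, M u⟫ ≤ -b := by
    intro t ht M hM
    have hz : x + t • u ∈ Metric.ball x δ := by
      rw [Metric.mem_ball, dist_self_add_left, norm_smul, hu, mul_one, Real.norm_of_nonneg ht.1]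
      exact ht.2.trans (by rwa [Metric.mem_ball, dist_eq_norm] at hy)
    have := sub_lt_inner_apply_of_mem_add_ball hu.le hv.le hvJ (hJ_near (mem_biUnion hz hM))
    rw [inner_neg_left]
    linarith
  have hmv := inner_sub_le_of_isPseudoJacobian hf hJf hT.le hslope
  rw [hy_eq, inner_neg_left] at hmv
  rw [le_div_iff₀ hT]
  calc b * T ≤ ⟪v, f y - f x⟫ := by linarith
    _ ≤ ‖v‖ * ‖f y - f x‖ := real_inner_le_norm _ _
    _ = ‖f y - f x‖ := by rw [hv, one_mul]

theorem lowerDini_ge_regIndex {n : ℕ}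
    (f : EuclideanSpace ℝ (Fin n) → EuclideanSpace ℝ (Fin n)) (hf : Continuous f)
    (Jf : EuclideanSpace ℝ (Fin n) →
      Set (EuclideanSpace ℝ (Fin n) →L[ℝ] EuclideanSpace ℝ (Fin n)))
    (hJf : ∀ y, IsPseudoJacobian f (Jf y) y)
    (x : EuclideanSpace ℝ (Fin n)) (husc : UscAt Jf x)
    (hreg : 0 < regIndex Jf x) :
    (regIndex Jf x : EReal) ≤ lowerDini f x := by
  refine le_of_forall_lt_imp_le_of_dense fun c hc => ?_
  induction c using EReal.rec with
  | bot => exact bot_le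
  | top => exact absurd hc not_top_lt
  | coe b =>
    have hb := eventually_le_slope_of_lt_regIndex hf hJf husc hreg (EReal.coe_lt_coe_iff.1 hc)
    exact le_liminf_of_le (by isBoundedDefault) (hb.mono fun y hy => EReal.coe_le_coe_iff.2 hy)
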